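/- arXiv:2104.06497 — 2 statements merged into one kernel-verified Lean document; each statement's English description precedes it below -/
import Mathlib

section
/- Let X be a real infinite-dimensional Banach space with a Schauder basis (x_n)_{n=1}^∞ with basis constant K, coordinate functionals (x*_n) and V the closed linear span of {x*_n : n ∈ ℕ} in X*. Then sh((x_n)) ≤ d̂(B_{X*}, V) ≤ (K+1)·sh((x_n)). -/
open Filter Metric NormedSpace Set Topology

noncomputable section

variable {E : Type*} [NormedAddCommGroup E] [NormedSpace ℝ E]

/-- `f` is the sequence of coordinate functionals of the Schauder basis `x`:
every vector has an expansion along `x`, and such expansions are unique. -/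
structure IsSchauderBasis (x : ℕ → E) (f : ℕ → E →L[ℝ] ℝ) : Prop where
  expand : ∀ v : E,
    Tendsto (fun n => ∑ i ∈ Finset.range n, f i v • x i) atTop (𝓝 v)
  unique : ∀ (a : ℕ → ℝ) (v : E),
    Tendsto (fun n => ∑ i ∈ Finset.range n, a i • x i) atTop (𝓝 v) → ∀ i, a i = f i v

/-- the `n`-th basis projection `P_n`. -/
def basisProj (x : ℕ → E) (f : ℕ → E →L[ℝ] ℝ) (n : ℕ) : E →L[ℝ] E :=
  ∑ i ∈ Finset.range n, (f i).smulRight (x i)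

/-- closed linear span of `{y i : i ≥ n}`. -/
def tailSpan (y : ℕ → E) (n : ℕ) : Submodule ℝ E :=
  (Submodule.span ℝ (y '' {i | n ≤ i})).topologicalClosure

/-- `‖g‖_n` : the norm of the restriction of `g` to the closed span of the tail of `y`. -/
def tailNorm (y : ℕ → E) (g : E →L[ℝ] ℝ) (n : ℕ) : ℝ :=
  ‖g.comp (tailSpan y n).subtypeL‖

/-- the quantity `sh` measuring how far a basic sequence is from being shrinking. -/
def sh (y : ℕ → E) : ℝ :=
  sSup ((fun g : E →L[ℝ] ℝ => limsup (tailNorm y g) atTop) '' {g | ‖g‖ ≤ 1})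

/-- non-symmetrised Hausdorff distance `d̂(A,B)`. -/
def hdist (A B : Set E) : ℝ := sSup ((fun a => infDist a B) '' A)

/-- ordinary distance between two sets. -/
def setDist (A B : Set E) : ℝ := sInf {d : ℝ | ∃ a ∈ A, ∃ b ∈ B, d = dist a b}

/-- `ca` measures how far a sequence is from being norm-Cauchy. -/
def ca (z : ℕ → E) : ℝ :=
  ⨅ n : ℕ, sSup {d : ℝ | ∃ k, n ≤ k ∧ ∃ l, n ≤ l ∧ d = ‖z k - z l‖}

/-- measure of non-separability. -/
def sep (A : Set E) : ℝ :=
  sInf {ε : ℝ | 0 < ε ∧ ∃ C : Set E, C.Countable ∧ ∀ a ∈ A, ∃ c ∈ C, ‖a - c‖ ≤ ε}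

/-- `V`: the closed linear span of the coordinate functionals. -/
def dualSpan (g : ℕ → E →L[ℝ] ℝ) : Submodule ℝ (StrongDual ℝ E) :=
  (Submodule.span ℝ (Set.range g)).topologicalClosure

lemma mem_dualSpan (g : ℕ → E →L[ℝ] ℝ) (i : ℕ) : g i ∈ dualSpan g :=
  Submodule.le_topologicalClosure _ (Submodule.subset_span ⟨i, rfl⟩)

/-- the quantity `bc₁` measuring non-bounded-completeness. -/
def bc1 (y : ℕ → E) : ℝ :=
  sSup {c : ℝ | ∃ a : ℕ → ℝ,
    (∀ n, ‖∑ i ∈ Finset.range n, a i • y i‖ ≤ 1) ∧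
    c = ca (fun n => ∑ i ∈ Finset.range n, a i • y i)}

/-- the quantity `bc₂`. -/
def bc2 (y : ℕ → E) (g : ℕ → E →L[ℝ] ℝ) : ℝ :=
  sSup {c : ℝ | ∃ φ : ↥(dualSpan g) →L[ℝ] ℝ, @Norm.norm _ (@ContinuousLinearMap.hasOpNorm ℝ ℝ ↥(dualSpan g) ℝ _ _ _ _ _ _ (RingHom.id ℝ)) φ ≤ 1 ∧
    c = ca (fun n => ∑ i ∈ Finset.range n, φ ⟨g i, mem_dualSpan g i⟩ • y i)}

/-- the quantity `bc₃`. -/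
def bc3 (y : ℕ → E) (g : ℕ → E →L[ℝ] ℝ) : ℝ :=
  sSup {c : ℝ | ∃ Φ : StrongDual ℝ (StrongDual ℝ E), ‖Φ‖ ≤ 1 ∧
    c = ca (fun n => ∑ i ∈ Finset.range n, Φ (g i) • y i)}

/-- `α_Y(X)`: measures how well `Y` embeds isomorphically into `X`. -/
def alpha (Y X : Type*) [NormedAddCommGroup Y] [NormedSpace ℝ Y]
    [NormedAddCommGroup X] [NormedSpace ℝ X] : ℝ :=
  sSup {c : ℝ | ∃ T : Y →L[ℝ] X, ‖T‖ ≤ 1 ∧ ∀ y : Y, c * ‖y‖ ≤ ‖T y‖}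

/-- `β_Y(X)`: measures how well `Y` embeds complementably into `X`. -/
def beta (Y X : Type*) [NormedAddCommGroup Y] [NormedSpace ℝ Y]
    [NormedAddCommGroup X] [NormedSpace ℝ X] : ℝ :=
  sSup {c : ℝ | ∃ (A : X →L[ℝ] Y) (B : Y →L[ℝ] X),
    A.comp B = ContinuousLinearMap.id ℝ Y ∧ c * (‖A‖ * ‖B‖) ≤ 1}

/-- weak-star closure of a subset of the bidual. -/
def wstarClosure {X : Type*} [NormedAddCommGroup X] [NormedSpace ℝ X]
    (S : Set (StrongDual ℝ (StrongDual ℝ X))) : Set (StrongDual ℝ (StrongDual ℝ X)) :=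
  {z | StrongDual.toWeakDual z ∈ closure (StrongDual.toWeakDual '' S)}

/-- the measure of weak non-compactness `wk_X(A)`. -/
def wk (X : Type*) [NormedAddCommGroup X] [NormedSpace ℝ X] (A : Set X) : ℝ :=
  hdist (wstarClosure ((inclusionInDoubleDual ℝ X) '' A))
    (Set.range (inclusionInDoubleDual ℝ X))

/-- weak-star cluster points in the bidual of a sequence in `X`. -/
def wclust {X : Type*} [NormedAddCommGroup X] [NormedSpace ℝ X] (u : ℕ → X) :
    Set (StrongDual ℝ (StrongDual ℝ X)) :=
  {z | MapClusterPt (StrongDual.toWeakDual z) atTop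
      (fun n => StrongDual.toWeakDual (inclusionInDoubleDual ℝ X (u n)))}

/-- the measure of weak non-compactness `wck_X(A)`. -/
def wck (X : Type*) [NormedAddCommGroup X] [NormedSpace ℝ X] (A : Set X) : ℝ :=
  sSup {c : ℝ | ∃ u : ℕ → X, (∀ n, u n ∈ A) ∧
    c = setDist (wclust u) (Set.range (inclusionInDoubleDual ℝ X))}


/-- the canonical map `j : X → V*` for a subspace `V` of the dual,
`⟨j v, x*⟩ = x*(v)`. -/
def jfun {X : Type*} [NormedAddCommGroup X] [NormedSpace ℝ X]
    (V : Submodule ℝ (StrongDual ℝ X)) (v : X) : ↥V →L[ℝ] ℝ :=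
  (inclusionInDoubleDual ℝ X v).comp V.subtypeL

/-- the space `ℓ₁` of absolutely summable real sequences. -/
abbrev ell1 : Type := lp (fun _ : ℕ => ℝ) 1

/-- the space `c₀` of real sequences converging to zero, with the sup norm. -/
abbrev czero : Type := ZeroAtInftyContinuousMap ℕ ℝ

end

/-!
The tail norms `‖g‖ₙ` decrease, so `limsup ‖g‖ₙ = infₙ ‖g‖ₙ`. A functional `w` in the
linear span of the coordinate functionals vanishes on a tail of the basis, so
`infₙ ‖g‖ₙ ≤ ‖g - w‖`, which gives `sh ≤ d̂(B_{X*}, V)`. Conversely `g ∘ Pₙ ∈ V`, and `g - g ∘ Pₙ`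
only sees `v - Pₙ v`, a vector of the tail span of norm at most `(K + 1)‖v‖`, so
`dist(g, V) ≤ (K + 1)‖g‖ₙ` for every `n`.
-/

open Filter Metric Set Topology

section TailNorm

variable {E : Type*} [NormedAddCommGroup E] [NormedSpace ℝ E] (y : ℕ → E)

lemma tailNorm_nonneg (g : E →L[ℝ] ℝ) (n : ℕ) : 0 ≤ tailNorm y g n :=
  ContinuousLinearMap.opNorm_nonneg _

lemma tailNorm_le_norm (g : E →L[ℝ] ℝ) (n : ℕ) : tailNorm y g n ≤ ‖g‖ :=
  ContinuousLinearMap.opNorm_le_bound _ (norm_nonneg g) fun v => g.le_opNorm v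

lemma tailNorm_add_le (g w : E →L[ℝ] ℝ) (n : ℕ) :
    tailNorm y (g + w) n ≤ tailNorm y g n + tailNorm y w n := by
  simpa only [tailNorm, ContinuousLinearMap.add_comp] using ContinuousLinearMap.opNorm_add_le _ _

lemma tailSpan_antitone : Antitone (tailSpan y) := fun _ _ hmn =>
  Submodule.topologicalClosure_mono <| Submodule.span_mono <| image_mono fun _ hi => hmn.trans hi

lemma tailNorm_antitone (g : E →L[ℝ] ℝ) : Antitone (tailNorm y g) := fun m _ hmn =>
  ContinuousLinearMap.opNorm_le_bound _ (tailNorm_nonneg y g m) fun v =>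
    (g.comp (tailSpan y m).subtypeL).le_opNorm ⟨v, tailSpan_antitone y hmn v.2⟩

lemma limsup_tailNorm_eq_iInf (g : E →L[ℝ] ℝ) :
    limsup (tailNorm y g) atTop = ⨅ n, tailNorm y g n :=
  (tendsto_atTop_ciInf (tailNorm_antitone y g)
    ⟨0, forall_mem_range.mpr (tailNorm_nonneg y g)⟩).limsup_eq

lemma limsup_tailNorm_le_tailNorm (g : E →L[ℝ] ℝ) (n : ℕ) :
    limsup (tailNorm y g) atTop ≤ tailNorm y g n := by
  rw [limsup_tailNorm_eq_iInf]
  exact ciInf_le ⟨0, forall_mem_range.mpr (tailNorm_nonneg y g)⟩ n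

lemma tailNorm_eq_zero_of_forall_apply_eq_zero {w : E →L[ℝ] ℝ} {n : ℕ}
    (hw : ∀ i, n ≤ i → w (y i) = 0) : tailNorm y w n = 0 := by
  have hker : tailSpan y n ≤ LinearMap.ker (w : E →ₗ[ℝ] ℝ) :=
    Submodule.topologicalClosure_minimal _
      (Submodule.span_le.mpr <| image_subset_iff.mpr hw) w.isClosed_ker
  refine le_antisymm (ContinuousLinearMap.opNorm_le_bound _ le_rfl fun v => ?_)
    (tailNorm_nonneg y w n)
  simp [show w v = 0 from hker v.2]

lemma limsup_tailNorm_le_sh {g : E →L[ℝ] ℝ} (hg : ‖g‖ ≤ 1) :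
    limsup (tailNorm y g) atTop ≤ sh y :=
  le_csSup ⟨1, forall_mem_image.mpr fun g' hg' =>
      (limsup_tailNorm_le_tailNorm y g' 0).trans ((tailNorm_le_norm y g' 0).trans hg')⟩
    (mem_image_of_mem _ hg)

lemma sh_le_of_limsup_le {c : ℝ}
    (hc : ∀ g : E →L[ℝ] ℝ, ‖g‖ ≤ 1 → limsup (tailNorm y g) atTop ≤ c) : sh y ≤ c :=
  csSup_le (Nonempty.image _ ⟨0, by simp⟩) (forall_mem_image.mpr hc)

end TailNorm

section HausdorffDistance

variable {E : Type*} [NormedAddCommGroup E] {A B : Set E}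

lemma infDist_le_hdist_of_mem (hA : Bornology.IsBounded A) (hB : B.Nonempty) {a : E}
    (ha : a ∈ A) : infDist a B ≤ hdist A B := by
  obtain ⟨b, hb⟩ := hB
  obtain ⟨r, hr⟩ := hA.subset_closedBall b
  refine le_csSup ⟨r, forall_mem_image.mpr fun a' ha' => ?_⟩ (mem_image_of_mem _ ha)
  exact (infDist_le_dist_of_mem hb).trans (hr ha')

lemma hdist_le_of_infDist_le (hA : A.Nonempty) {c : ℝ} (hc : ∀ a ∈ A, infDist a B ≤ c) :
    hdist A B ≤ c :=
  csSup_le (hA.image _) (forall_mem_image.mpr hc)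

end HausdorffDistance

section BasisProjection

variable {X : Type*} [NormedAddCommGroup X] [NormedSpace ℝ X] {x : ℕ → X} {f : ℕ → X →L[ℝ] ℝ}

lemma basisProj_apply (n : ℕ) (v : X) :
    basisProj x f n v = ∑ i ∈ Finset.range n, f i v • x i := by
  simp [basisProj]

lemma comp_basisProj_mem_span (g : X →L[ℝ] ℝ) (n : ℕ) :
    g.comp (basisProj x f n) ∈ Submodule.span ℝ (range f) := by
  have : g.comp (basisProj x f n) = ∑ i ∈ Finset.range n, g (x i) • f i := by
    ext v
    simp [basisProj_apply, mul_comm]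
  rw [this]
  exact Submodule.sum_mem _ fun i _ => Submodule.smul_mem _ _ (Submodule.subset_span ⟨i, rfl⟩)

end BasisProjection

namespace IsSchauderBasis

variable {X : Type*} [NormedAddCommGroup X] [NormedSpace ℝ X] {x : ℕ → X} {f : ℕ → X →L[ℝ] ℝ}

lemma tendsto_basisProj (hb : IsSchauderBasis x f) (v : X) :
    Tendsto (fun n => basisProj x f n v) atTop (𝓝 v) := by
  simpa only [basisProj_apply] using hb.expand v

lemma norm_basisProj_le_iSup [CompleteSpace X] (hb : IsSchauderBasis x f) (n : ℕ) :
    ‖basisProj x f n‖ ≤ ⨆ m, ‖basisProj x f m‖ := by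
  obtain ⟨C, hC⟩ := banach_steinhaus fun v => by
    obtain ⟨C, hC⟩ := (hb.tendsto_basisProj v).norm.bddAbove_range
    exact ⟨C, fun n => hC (mem_range_self n)⟩
  exact le_ciSup ⟨C, forall_mem_range.mpr hC⟩ n

lemma coord_apply_basis (hb : IsSchauderBasis x f) (i j : ℕ) :
    f i (x j) = if i = j then 1 else 0 := by
  refine (hb.unique (fun i => if i = j then 1 else 0) (x j) ?_ i).symm
  refine tendsto_const_nhds.congr' <| eventually_atTop.mpr ⟨j + 1, fun n hn => ?_⟩
  simp [ite_smul, Finset.sum_ite_eq', Nat.lt_of_succ_le hn]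

lemma exists_tailNorm_eq_zero_of_mem_span (hb : IsSchauderBasis x f) {w : X →L[ℝ] ℝ}
    (hw : w ∈ Submodule.span ℝ (range f)) : ∃ N, tailNorm x w N = 0 := by
  suffices ∀ᶠ j in atTop, w (x j) = 0 by
    obtain ⟨N, hN⟩ := eventually_atTop.mp this
    exact ⟨N, tailNorm_eq_zero_of_forall_apply_eq_zero x hN⟩
  induction hw using Submodule.span_induction with
  | mem w hw =>
    obtain ⟨i, rfl⟩ := hw
    filter_upwards [eventually_gt_atTop i] with j hj
    simp [hb.coord_apply_basis, hj.ne]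
  | zero => exact Eventually.of_forall fun _ => rfl
  | add w w' _ _ hw hw' => filter_upwards [hw, hw'] with j h h'; simp [h, h']
  | smul c w _ hw => filter_upwards [hw] with j h; simp [h]

lemma limsup_tailNorm_le_infDist (hb : IsSchauderBasis x f) (g : X →L[ℝ] ℝ) :
    limsup (tailNorm x g) atTop ≤ infDist g (dualSpan f : Set (StrongDual ℝ X)) := by
  rw [dualSpan, Submodule.topologicalClosure_coe, infDist_closure]
  refine (le_infDist ⟨0, Submodule.zero_mem _⟩).mpr fun w hw => ?_
  obtain ⟨N, hN⟩ := hb.exists_tailNorm_eq_zero_of_mem_span hw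
  calc limsup (tailNorm x g) atTop ≤ tailNorm x (g - w + w) N := by
        simpa using limsup_tailNorm_le_tailNorm x g N
    _ ≤ tailNorm x (g - w) N + tailNorm x w N := tailNorm_add_le x _ _ N
    _ ≤ dist g w := by rw [hN, add_zero, dist_eq_norm]; exact tailNorm_le_norm x _ N

lemma sub_basisProj_mem_tailSpan (hb : IsSchauderBasis x f) (n : ℕ) (v : X) :
    v - basisProj x f n v ∈ tailSpan x n := by
  have hlim : Tendsto (fun m => ∑ i ∈ Finset.Ico n m, f i v • x i) atTop
      (𝓝 (v - basisProj x f n v)) := by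
    refine ((hb.tendsto_basisProj v).sub_const _).congr' ?_
    filter_upwards [eventually_ge_atTop n] with m hm
    rw [basisProj_apply, basisProj_apply, Finset.sum_Ico_eq_sub _ hm]
  refine (Submodule.isClosed_topologicalClosure _).mem_of_tendsto hlim
    (Eventually.of_forall fun m => ?_)
  exact Submodule.le_topologicalClosure _ <| Submodule.sum_mem _ fun i hi =>
    Submodule.smul_mem _ _ <| Submodule.subset_span ⟨i, (Finset.mem_Ico.mp hi).1, rfl⟩

lemma norm_sub_comp_basisProj_le (hb : IsSchauderBasis x f) {K : ℝ}
    (hK : ∀ n, ‖basisProj x f n‖ ≤ K) (g : X →L[ℝ] ℝ) (n : ℕ) :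
    ‖g - g.comp (basisProj x f n)‖ ≤ (K + 1) * tailNorm x g n := by
  have hK0 : 0 ≤ K + 1 := by linarith [norm_nonneg (basisProj x f 0), hK 0]
  refine ContinuousLinearMap.opNorm_le_bound _ (mul_nonneg hK0 (tailNorm_nonneg x g n)) fun v => ?_
  have hproj : ‖v - basisProj x f n v‖ ≤ (K + 1) * ‖v‖ := by
    linarith [norm_sub_le v (basisProj x f n v), (basisProj x f n).le_of_opNorm_le (hK n) v]
  calc ‖(g - g.comp (basisProj x f n)) v‖
      = ‖g.comp (tailSpan x n).subtypeL ⟨_, hb.sub_basisProj_mem_tailSpan n v⟩‖ := by simp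
    _ ≤ tailNorm x g n * ‖v - basisProj x f n v‖ := ContinuousLinearMap.le_opNorm _ _
    _ ≤ tailNorm x g n * ((K + 1) * ‖v‖) := by gcongr; exact tailNorm_nonneg x g n
    _ = (K + 1) * tailNorm x g n * ‖v‖ := by ring

lemma infDist_le_limsup_tailNorm (hb : IsSchauderBasis x f) {K : ℝ}
    (hK : ∀ n, ‖basisProj x f n‖ ≤ K) (g : X →L[ℝ] ℝ) :
    infDist g (dualSpan f : Set (StrongDual ℝ X)) ≤ (K + 1) * limsup (tailNorm x g) atTop := by
  have hK0 : 0 ≤ K + 1 := by linarith [norm_nonneg (basisProj x f 0), hK 0]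
  rw [limsup_tailNorm_eq_iInf, Real.mul_iInf_of_nonneg hK0]
  refine le_ciInf fun n => ?_
  calc infDist g (dualSpan f : Set (StrongDual ℝ X)) ≤ dist g (g.comp (basisProj x f n)) :=
        infDist_le_dist_of_mem (Submodule.le_topologicalClosure _ (comp_basisProj_mem_span g n))
    _ ≤ (K + 1) * tailNorm x g n := by
        rw [dist_eq_norm]
        exact hb.norm_sub_comp_basisProj_le hK g n

end IsSchauderBasis

theorem sh_le_hdist_le_general {X : Type*} [NormedAddCommGroup X] [NormedSpace ℝ X] [CompleteSpace X]
    (x : ℕ → X) (f : ℕ → X →L[ℝ] ℝ) (hb : IsSchauderBasis x f)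
    (K : ℝ) (hK : K = ⨆ n : ℕ, ‖basisProj x f n‖) :
    sh x ≤ hdist (Metric.closedBall (0 : StrongDual ℝ X) 1) (dualSpan f : Set (StrongDual ℝ X)) ∧
    hdist (Metric.closedBall (0 : StrongDual ℝ X) 1) (dualSpan f : Set (StrongDual ℝ X)) ≤ (K + 1) * sh x := by
  have hKn : ∀ n, ‖basisProj x f n‖ ≤ K := hK ▸ hb.norm_basisProj_le_iSup
  constructor
  · refine sh_le_of_limsup_le x fun g hg => (hb.limsup_tailNorm_le_infDist g).trans ?_
    exact infDist_le_hdist_of_mem isBounded_closedBall ⟨0, Submodule.zero_mem _⟩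
      (mem_closedBall_zero_iff.mpr hg)
  · refine hdist_le_of_infDist_le ⟨0, mem_closedBall_self zero_le_one⟩ fun g hg => ?_
    have hK0 : 0 ≤ K + 1 := by linarith [norm_nonneg (basisProj x f 0), hKn 0]
    exact (hb.infDist_le_limsup_tailNorm hKn g).trans <| mul_le_mul_of_nonneg_left
      (limsup_tailNorm_le_sh x (mem_closedBall_zero_iff.mp hg)) hK0

/-- Theorem 3.3: `sh((xₙ)) ≤ d̂(B_{X*}, V) ≤ (K+1)·sh((xₙ))`. -/
theorem sh_le_hdist_le {X : Type*} [NormedAddCommGroup X] [NormedSpace ℝ X] [CompleteSpace X]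
    (hinf : ¬ FiniteDimensional ℝ X)
    (x : ℕ → X) (f : ℕ → X →L[ℝ] ℝ) (hb : IsSchauderBasis x f)
    (K : ℝ) (hK : K = ⨆ n : ℕ, ‖basisProj x f n‖) :
    sh x ≤ hdist (Metric.closedBall (0 : StrongDual ℝ X) 1) (dualSpan f : Set (StrongDual ℝ X)) ∧
    hdist (Metric.closedBall (0 : StrongDual ℝ X) 1) (dualSpan f : Set (StrongDual ℝ X)) ≤ (K + 1) * sh x :=
  sh_le_hdist_le_general x f hb K hK
end

section
/- Let X be a real infinite-dimensional Banach space with a Schauder basis (x_n)_{n=1}^∞, coordinate functionals (x*_n) and V the closed linear span of {x*_n : n ∈ ℕ} in X*. Then α_{ℓ₁}(X) ≤ sep(B_{X*}) ≤ d̂(B_{X*}, V). -/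
open Filter Metric NormedSpace Set Topology

/-!
An embedding `T : ℓ₁ → X` with `‖T‖ ≤ 1` and `c ‖y‖ ≤ ‖T y‖` turns every sign sequence into a
functional on `T(ℓ₁)` of norm at most `1 / c` taking the values `±1` on the images of the unit
vectors. Extending these by Hahn–Banach and rescaling by `c` gives continuum many points of
`B_{X*}` at mutual distance at least `2c`, and by pigeonhole no countable set is within
distance less than `c` of all of them.

Since `V` is separable, a countable dense subset of `V` is an `ε`-net of `B_{X*}` for every
`ε > d̂(B_{X*}, V)`.
-/

section Separability

variable {E : Type*} [NormedAddCommGroup E]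

lemma sep_nonneg (A : Set E) : 0 ≤ sep A :=
  Real.sInf_nonneg fun _ hε => hε.1.le

lemma sep_le_of_countable_cover {A C : Set E} {ε : ℝ} (hε : 0 < ε) (hC : C.Countable)
    (hcover : ∀ a ∈ A, ∃ c ∈ C, ‖a - c‖ ≤ ε) : sep A ≤ ε :=
  csInf_le ⟨0, fun _ hδ => hδ.1.le⟩ ⟨hε, C, hC, hcover⟩

lemma le_sep_of_forall_countable_cover {A : Set E} (hA : Bornology.IsBounded A) {r : ℝ}
    (h : ∀ ε > 0, ∀ C : Set E, C.Countable → (∀ a ∈ A, ∃ c ∈ C, ‖a - c‖ ≤ ε) → r ≤ ε) :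
    r ≤ sep A := by
  obtain ⟨R, hR⟩ := hA.subset_closedBall 0
  refine le_csInf ⟨max R 1, lt_of_lt_of_le one_pos (le_max_right _ _), {0},
    countable_singleton 0, fun a ha => ⟨0, rfl, ?_⟩⟩
    fun ε ⟨hε, C, hC, hcover⟩ => h ε hε C hC hcover
  simpa using (mem_closedBall_zero_iff.mp (hR ha)).trans (le_max_left R 1)

lemma le_sep_of_pairwise_separated {ι : Type*} [Uncountable ι] {A : Set E}
    (hA : Bornology.IsBounded A) {c : ℝ} (h : ι → E) (hmem : ∀ i, h i ∈ A)
    (hsep : Pairwise fun i j => 2 * c ≤ ‖h i - h j‖) : c ≤ sep A := by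
  refine le_sep_of_forall_countable_cover hA fun ε _ C hC hcover => ?_
  choose center hcenter hdist using fun i => hcover (h i) (hmem i)
  have : Countable C := hC.to_subtype
  obtain ⟨i, j, hij, hne⟩ := Function.not_injective_iff.mp
    (not_injective_uncountable_countable fun i => (⟨center i, hcenter i⟩ : C))
  have hsame : center i = center j := congrArg Subtype.val hij
  have : 2 * c ≤ 2 * ε := calc
    2 * c ≤ ‖h i - h j‖ := hsep hne
    _ = ‖(h i - center i) - (h j - center j)‖ := by rw [hsame, sub_sub_sub_cancel_right]
    _ ≤ ‖h i - center i‖ + ‖h j - center j‖ := norm_sub_le _ _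
    _ ≤ 2 * ε := by linarith [hdist i, hdist j]
  linarith

lemma hdist_nonneg (A B : Set E) : 0 ≤ hdist A B :=
  Real.sSup_nonneg <| forall_mem_image.mpr fun _ _ => infDist_nonneg

lemma infDist_le_hdist {A B : Set E} (hA : Bornology.IsBounded A) (hB : B.Nonempty) {a : E}
    (ha : a ∈ A) : infDist a B ≤ hdist A B := by
  obtain ⟨b, hb⟩ := hB
  obtain ⟨R, hR⟩ := hA.subset_closedBall b
  refine le_csSup ⟨R, forall_mem_image.mpr fun a' ha' => ?_⟩ (mem_image_of_mem _ ha)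
  exact (infDist_le_dist_of_mem hb).trans (hR ha')

lemma sep_le_hdist_of_isSeparable {A S : Set E} (hA : Bornology.IsBounded A)
    (hS : TopologicalSpace.IsSeparable S) (hS₀ : S.Nonempty) : sep A ≤ hdist A S := by
  obtain ⟨C, hC, hSC⟩ := hS
  refine le_of_forall_gt_imp_ge_of_dense fun ε hε => ?_
  refine sep_le_of_countable_cover ((hdist_nonneg A S).trans_lt hε) hC fun a ha => ?_
  obtain ⟨s, hs, has⟩ :=
    (infDist_lt_iff hS₀).mp ((infDist_le_hdist hA hS₀ ha).trans_lt hε)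
  obtain ⟨c, hc, hsc⟩ := Metric.mem_closure_iff.mp (hSC hs) (ε - dist a s) (by linarith)
  refine ⟨c, hc, ?_⟩
  rw [← dist_eq_norm]
  linarith [dist_triangle a s c]

end Separability

lemma isSeparable_dualSpan {E : Type*} [NormedAddCommGroup E] [NormedSpace ℝ E]
    (f : ℕ → E →L[ℝ] ℝ) : TopologicalSpace.IsSeparable (dualSpan f : Set (StrongDual ℝ E)) := by
  rw [dualSpan, Submodule.topologicalClosure_coe]
  exact (countable_range f).isSeparable.span.closure

section EllOneEmbedding

variable {F G : Type*} [NormedAddCommGroup F] [NormedSpace ℝ F]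
  [NormedAddCommGroup G] [NormedSpace ℝ G]

/-- Hahn–Banach through a bounded-below operator: `φ ∘ T⁻¹` on `range T` has norm
at most `‖φ‖ / c`. -/
lemma exists_dual_comp_eq_of_lowerBound (T : F →L[ℝ] G) {c : ℝ} (hc : 0 < c)
    (hT : ∀ y, c * ‖y‖ ≤ ‖T y‖) (φ : StrongDual ℝ F) :
    ∃ g : StrongDual ℝ G, ‖g‖ ≤ ‖φ‖ / c ∧ g.comp T = φ := by
  have hinj : Function.Injective T.toLinearMap := by
    refine (injective_iff_map_eq_zero _).mpr fun y hy => norm_le_zero_iff.mp ?_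
    have := hT y
    rw [show T y = 0 from hy, norm_zero] at this
    nlinarith [norm_nonneg y]
  let e := LinearEquiv.ofInjective T.toLinearMap hinj
  have he : ∀ y, (e y : G) = T y := fun _ => rfl
  have hsymm : ∀ z, ‖e.symm z‖ ≤ c⁻¹ * ‖z‖ := fun z => by
    rw [← div_eq_inv_mul, le_div_iff₀ hc, mul_comm]
    simpa [← he] using hT (e.symm z)
  let eC := e.toContinuousLinearEquivOfBounds ‖T‖ c⁻¹ (fun y => T.le_opNorm y) hsymm
  have hnorm : ‖eC.symm.toContinuousLinearMap‖ ≤ c⁻¹ :=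
    ContinuousLinearMap.opNorm_le_bound _ (inv_nonneg.mpr hc.le) hsymm
  obtain ⟨g, hg, hgnorm⟩ := exists_extension_norm_eq _ (φ.comp eC.symm.toContinuousLinearMap)
  refine ⟨g, ?_, ?_⟩
  · calc ‖g‖ = ‖φ.comp eC.symm.toContinuousLinearMap‖ := hgnorm
      _ ≤ ‖φ‖ * c⁻¹ := (φ.opNorm_comp_le _).trans (by gcongr)
      _ = ‖φ‖ / c := (div_eq_mul_inv _ _).symm
  · ext y
    exact (hg (e y)).trans (congrArg φ (e.symm_apply_apply y))

lemma exists_ell1_dual_apply_single (s : ℕ → ℝ) (hs : ∀ n, ‖s n‖ ≤ 1) :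
    ∃ φ : StrongDual ℝ ell1, ‖φ‖ ≤ 1 ∧ ∀ n, φ (lp.single 1 n 1) = s n := by
  have hsK : ∀ n, ‖s n • ContinuousLinearMap.id ℝ ℝ‖ ≤ 1 := fun n =>
    (norm_smul_le (s n) (ContinuousLinearMap.id ℝ ℝ)).trans <| mul_le_one₀ (hs n)
      (norm_nonneg _) ContinuousLinearMap.norm_id_le
  refine ⟨lp.tsumCLM ℝ ℕ ℝ ∘L lp.mapCLM 1 _ zero_le_one hsK, ?_, fun n => ?_⟩
  · calc _ ≤ ‖lp.tsumCLM ℝ ℕ ℝ‖ * ‖lp.mapCLM 1 _ zero_le_one hsK‖ :=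
          ContinuousLinearMap.opNorm_comp_le _ _
      _ ≤ 1 * 1 := by gcongr; exacts [lp.norm_tsumCLM_le, lp.norm_mapCLM_le _ _ _ _]
      _ = 1 := one_mul 1
  · show ∑' i, s i • lp.single 1 n (1 : ℝ) i = s n
    rw [tsum_eq_single n fun i hi => by rw [lp.single_apply_ne 1 n _ hi, smul_zero],
      lp.single_apply_self, smul_eq_mul, mul_one]

instance : Uncountable (Set ℕ) := by
  rw [← Cardinal.aleph0_lt_mk_iff, Cardinal.mk_set_nat]
  exact Cardinal.aleph0_lt_continuum

lemma exists_pairwise_separated_closedBall_dual (T : ell1 →L[ℝ] G) (hT₁ : ‖T‖ ≤ 1) {c : ℝ}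
    (hc : 0 < c) (hT : ∀ y, c * ‖y‖ ≤ ‖T y‖) :
    ∃ h : Set ℕ → StrongDual ℝ G, (∀ A, h A ∈ closedBall 0 1) ∧
      Pairwise fun A B => 2 * c ≤ ‖h A - h B‖ := by
  classical
  let sign (A : Set ℕ) (n : ℕ) : ℝ := if n ∈ A then 1 else -1
  have hsign : ∀ A n, ‖sign A n‖ ≤ 1 := fun A n => by unfold sign; split_ifs <;> simp
  choose φ hφ hφe using fun A => exists_ell1_dual_apply_single (sign A) (hsign A)
  choose g hg hgT using fun A => exists_dual_comp_eq_of_lowerBound T hc hT (φ A)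
  have hgsign : ∀ A n, g A (T (lp.single 1 n 1)) = sign A n := fun A n => by
    rw [← ContinuousLinearMap.comp_apply, hgT, hφe]
  refine ⟨fun A => c • g A, fun A => ?_, fun A B hAB => ?_⟩
  · rw [mem_closedBall_zero_iff, norm_smul, Real.norm_eq_abs, abs_of_pos hc]
    calc c * ‖g A‖ ≤ c * (‖φ A‖ / c) := by gcongr; exact hg A
      _ ≤ c * (1 / c) := by gcongr; exact hφ A
      _ = 1 := by field_simp
  · obtain ⟨n, hn⟩ : ∃ n, ¬(n ∈ A ↔ n ∈ B) := by
      by_contra! h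
      exact hAB (Set.ext h)
    have hgap : 2 ≤ ‖(g A - g B) (T (lp.single 1 n 1))‖ := by
      rw [sub_apply, hgsign, hgsign]
      by_cases hA : n ∈ A <;> by_cases hB : n ∈ B <;> simp_all [sign] <;> norm_num
    have hTe : ‖T (lp.single 1 n 1)‖ ≤ 1 :=
      (T.le_opNorm _).trans (by rw [lp.norm_single one_pos, norm_one, mul_one]; exact hT₁)
    have hdiff : 2 ≤ ‖g A - g B‖ :=
      hgap.trans <| (ContinuousLinearMap.le_opNorm _ _).trans <|
        mul_le_of_le_one_right (norm_nonneg _) hTe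
    show 2 * c ≤ ‖c • g A - c • g B‖
    rw [show c • g A - c • g B = c • (g A - g B) from (smul_sub c (g A) (g B)).symm, norm_smul,
      Real.norm_eq_abs, abs_of_pos hc]
    nlinarith

lemma alpha_ell1_le_sep_closedBall_dual :
    alpha ell1 G ≤ sep (closedBall (0 : StrongDual ℝ G) 1) := by
  refine Real.sSup_le (fun c ⟨T, hT₁, hT⟩ => ?_) (sep_nonneg _)
  rcases le_or_gt c 0 with hc | hc
  · exact hc.trans (sep_nonneg _)
  · obtain ⟨h, hmem, hsep⟩ := exists_pairwise_separated_closedBall_dual T hT₁ hc hT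
    exact le_sep_of_pairwise_separated isBounded_closedBall h hmem hsep

end EllOneEmbedding

theorem alpha_le_sep_le_hdist_general {X : Type*} [NormedAddCommGroup X] [NormedSpace ℝ X]
    (f : ℕ → X →L[ℝ] ℝ) :
    alpha ell1 X ≤ sep (Metric.closedBall (0 : StrongDual ℝ X) 1) ∧
    sep (Metric.closedBall (0 : StrongDual ℝ X) 1) ≤
      hdist (Metric.closedBall (0 : StrongDual ℝ X) 1) (dualSpan f : Set (StrongDual ℝ X)) :=
  ⟨alpha_ell1_le_sep_closedBall_dual,
    sep_le_hdist_of_isSeparable isBounded_closedBall (isSeparable_dualSpan f)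
      ⟨0, (dualSpan f).zero_mem⟩⟩

/-- Theorem 3.4: `α_{ℓ₁}(X) ≤ sep(B_{X*}) ≤ d̂(B_{X*}, V)`. -/
theorem alpha_le_sep_le_hdist {X : Type*} [NormedAddCommGroup X] [NormedSpace ℝ X]
    [CompleteSpace X] (hinf : ¬ FiniteDimensional ℝ X)
    (x : ℕ → X) (f : ℕ → X →L[ℝ] ℝ) (hb : IsSchauderBasis x f) :
    alpha ell1 X ≤ sep (Metric.closedBall (0 : StrongDual ℝ X) 1) ∧
    sep (Metric.closedBall (0 : StrongDual ℝ X) 1) ≤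
      hdist (Metric.closedBall (0 : StrongDual ℝ X) 1) (dualSpan f : Set (StrongDual ℝ X)) :=
  alpha_le_sep_le_hdist_general f
end
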